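/- In the welded braid group WB_n (without wens), the map sending ρ_i ↦ ρ_i and σ_i ↦ ρ_iσ_i^{−1}ρ_i extends to a well-defined group endomorphism of WB_n (sign reversal), and this endomorphism is an involutive automorphism of WB_n. -/
import Mathlib


/-- Generators of the (non-extended) welded braid group on `n` strands. -/
inductive WGen (n : ℕ) : Type
  | sigma (i : ℕ) (h : i + 1 < n) : WGen n
  | rho (i : ℕ) (h : i + 1 < n) : WGen n

def WSg (n i : ℕ) (h : i + 1 < n) : FreeGroup (WGen n) := FreeGroup.of (WGen.sigma i h)
def WRg (n i : ℕ) (h : i + 1 < n) : FreeGroup (WGen n) := FreeGroup.of (WGen.rho i h)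

/-- Defining relations of the welded braid group `WB_n`. -/
def wRels (n : ℕ) : Set (FreeGroup (WGen n)) :=
  { r |
    (∃ (i j : ℕ) (hi : i + 1 < n) (hj : j + 1 < n), i + 1 < j ∧
      r = WSg n i hi * WSg n j hj * (WSg n j hj * WSg n i hi)⁻¹) ∨
    (∃ (i : ℕ) (h : i + 2 < n),
      r = WSg n i (by omega) * WSg n (i+1) h * WSg n i (by omega) *
        (WSg n (i+1) h * WSg n i (by omega) * WSg n (i+1) h)⁻¹) ∨
    (∃ (i j : ℕ) (hi : i + 1 < n) (hj : j + 1 < n), i + 1 < j ∧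
      r = WRg n i hi * WRg n j hj * (WRg n j hj * WRg n i hi)⁻¹) ∨
    (∃ (i : ℕ) (h : i + 2 < n),
      r = WRg n i (by omega) * WRg n (i+1) h * WRg n i (by omega) *
        (WRg n (i+1) h * WRg n i (by omega) * WRg n (i+1) h)⁻¹) ∨
    (∃ (i : ℕ) (h : i + 1 < n), r = WRg n i h * WRg n i h) ∨
    (∃ (i j : ℕ) (hi : i + 1 < n) (hj : j + 1 < n), (i + 1 < j ∨ j + 1 < i) ∧
      r = WRg n i hi * WSg n j hj * (WSg n j hj * WRg n i hi)⁻¹) ∨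
    (∃ (i : ℕ) (h : i + 2 < n),
      r = WRg n (i+1) h * WRg n i (by omega) * WSg n (i+1) h *
        (WSg n i (by omega) * WRg n (i+1) h * WRg n i (by omega))⁻¹) ∨
    (∃ (i : ℕ) (h : i + 2 < n),
      r = WSg n (i+1) h * WSg n i (by omega) * WRg n (i+1) h *
        (WRg n i (by omega) * WSg n (i+1) h * WSg n i (by omega))⁻¹) }

/-- The welded braid group `WB_n`. -/
abbrev WB (n : ℕ) := PresentedGroup (wRels n)

def ws (n i : ℕ) (h : i + 1 < n) : WB n := PresentedGroup.of (WGen.sigma i h)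
def wr (n i : ℕ) (h : i + 1 < n) : WB n := PresentedGroup.of (WGen.rho i h)


section Core
variable {G : Type*} [Group G]

lemma sr_core_braid (a b s u : G) (ha : a*a = 1) (hb : b*b = 1) (hab : a*b*a = b*a*b)
    (hbr : s*u*s = u*s*u) (h5 : b*a*u = s*b*a) (h6 : u*s*b = a*u*s) :
    a*s⁻¹*a*(b*u⁻¹*b)*(a*s⁻¹*a) = b*u⁻¹*b*(a*s⁻¹*a)*(b*u⁻¹*b) := by
  have ia : a⁻¹ = a := by rw [inv_eq_iff_mul_eq_one, ha]
  have ib : b⁻¹ = b := by rw [inv_eq_iff_mul_eq_one, hb]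
  have haz : ∀ z : G, a*(a*z) = z := fun z => by rw [← mul_assoc, ha, one_mul]
  have hbz : ∀ z : G, b*(b*z) = z := fun z => by rw [← mul_assoc, hb, one_mul]
  have hu : u = a*(b*(s*(b*a))) := by
    have h := congrArg (fun x => a*(b*x)) h5
    simpa only [mul_assoc, ia, ib, haz, hbz, ha, hb, one_mul, mul_one, mul_inv_rev, inv_inv,
      mul_inv_cancel_left, inv_mul_cancel_left, mul_inv_cancel, inv_mul_cancel] using h
  rw [hu] at hbr h6 ⊢
  -- abbreviations (syntactic): T = b*s*b, w = a*b, M = (a*b)*(s*((b*a)*s))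
  -- hac, hca'
  have hac : a*(b*(a*b)) = b*a := by
    calc a*(b*(a*b)) = (a*b*a)*b := by
          simp only [mul_assoc]
      _ = (b*a*b)*b := by rw [hab]
      _ = b*a := by
          simp only [mul_assoc, ia, ib, haz, hbz, ha, hb, one_mul, mul_one]
  have hca : b*(a*(b*a)) = a*b := by
    calc b*(a*(b*a)) = (b*a*b)*a := by
          simp only [mul_assoc]
      _ = (a*b*a)*a := by rw [← hab]
      _ = a*b := by
          simp only [mul_assoc, ia, ib, haz, hbz, ha, hb, one_mul, mul_one]
  -- K2 : TwT = M
  have K2 : b*s*b*(a*b)*(b*s*b) = (a*b)*(s*((b*a)*s)) := by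
    calc b*s*b*(a*b)*(b*s*b)
        = a*((a*(b*(s*(b*a))))*s*b) := by
          simp only [mul_assoc, haz, hbz, ha, hb, one_mul, mul_one]
      _ = a*(a * (a*(b*(s*(b*a)))) * s) := by rw [h6]
      _ = (a*b)*(s*((b*a)*s)) := by
          simp only [mul_assoc, haz, hbz, ha, hb, one_mul, mul_one]
  -- H2 : sMs = MM
  have H2 : s*((a*b)*(s*((b*a)*s)))*s
      = ((a*b)*(s*((b*a)*s)))*((a*b)*(s*((b*a)*s))) := by
    calc s*((a*b)*(s*((b*a)*s)))*s
        = (s*(a*(b*(s*(b*a))))*s)*s := by simp only [mul_assoc]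
      _ = ((a*(b*(s*(b*a))))*s*(a*(b*(s*(b*a)))))*s := by rw [hbr]
      _ = ((a*b)*(s*((b*a)*s)))*((a*b)*(s*((b*a)*s))) := by simp only [mul_assoc]
  have P2 : (b*s*b*(a*b)*(b*s*b))*(b*s*b*(a*b)*(b*s*b))
      = s*(b*s*b*(a*b)*(b*s*b))*s := by rw [K2]; exact H2.symm
  have P3 : s*((b*a)*(s*(s*((b*a)*s))))
      = (b*s*b)*(s*((b*a)*s))*(b*s*b) := by
    calc s*((b*a)*(s*(s*((b*a)*s))))
        = b*((b*s*b*(a*b)*(b*s*b))*(b*s*b*(a*b)*(b*s*b)))*b := by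
          simp only [mul_assoc, haz, hbz, ha, hb, one_mul, mul_one]
      _ = b*(s*(b*s*b*(a*b)*(b*s*b))*s)*b := by rw [P2]
      _ = (b*s*b)*(s*((b*a)*s))*(b*s*b) := by
          simp only [mul_assoc, haz, hbz, ha, hb, one_mul, mul_one]
  have P4 : s*((b*a)*(s*((b*a)*((b*s*b)*(a*b)))))
      = (b*s*b)*(s*((b*a)*s)) := by
    calc s*((b*a)*(s*((b*a)*((b*s*b)*(a*b)))))
        = s*((b*a)*(s*((b*a)*((b*s*b*(a*b)*(b*s*b))*(b*s⁻¹*b))))) := by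
          simp only [mul_assoc, ia, ib, haz, hbz, ha, hb, one_mul, mul_one,
            mul_inv_cancel_left, inv_mul_cancel_left, mul_inv_cancel, inv_mul_cancel]
      _ = s*((b*a)*(s*((b*a)*(((a*b)*(s*((b*a)*s)))*(b*s⁻¹*b))))) := by rw [K2]
      _ = (s*((b*a)*(s*(s*((b*a)*s)))))*(b*s⁻¹*b) := by
          simp only [mul_assoc, haz, hbz, ha, hb, one_mul, mul_one]
      _ = ((b*s*b)*(s*((b*a)*s))*(b*s*b))*(b*s⁻¹*b) := by rw [P3]
      _ = (b*s*b)*(s*((b*a)*s)) := by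
          simp only [mul_assoc, ia, ib, haz, hbz, ha, hb, one_mul, mul_one,
            mul_inv_cancel_left, inv_mul_cancel_left, mul_inv_cancel, inv_mul_cancel]
  have P5 : ((a*b)*(s*((b*a)*s)))*((b*a)*((b*s*b)*(a*b)))
      = (a*b)*((b*s*b)*((b*a)*((a*b)*(s*((b*a)*s))))) := by
    calc ((a*b)*(s*((b*a)*s)))*((b*a)*((b*s*b)*(a*b)))
        = (a*b)*(s*((b*a)*(s*((b*a)*((b*s*b)*(a*b)))))) := by
          simp only [mul_assoc, haz, hbz, ha, hb, one_mul, mul_one]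
      _ = (a*b)*((b*s*b)*(s*((b*a)*s))) := by rw [P4]
      _ = (a*b)*((b*s*b)*((b*a)*((a*b)*(s*((b*a)*s))))) := by
          simp only [mul_assoc, haz, hbz, ha, hb, one_mul, mul_one]
  have P6 : b*s*b*(a*b)*(b*s*b)*((b*a)*(b*s*b))
      = (a*b)*((b*s*b)*((b*a)*(b*s*b*(a*b)*(b*s*b))))*(b*a) := by
    calc b*s*b*(a*b)*(b*s*b)*((b*a)*(b*s*b))
        = ((a*b)*(s*((b*a)*s)))*((b*a)*(b*s*b)) := by rw [K2]
      _ = ((a*b)*(s*((b*a)*s)))*((b*a)*((b*s*b)*(a*b)))*(b*a) := by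
          simp only [mul_assoc, haz, hbz, ha, hb, one_mul, mul_one]
      _ = ((a*b)*((b*s*b)*((b*a)*((a*b)*(s*((b*a)*s))))))*(b*a) := by rw [P5]
      _ = (a*b)*((b*s*b)*((b*a)*(b*s*b*(a*b)*(b*s*b))))*(b*a) := by rw [← K2]
  have sG : s*((b*a)*(s*((a*b)*s)))
      = (b*a)*(s*((a*b)*(s*((b*a)*(s*(a*b)))))) := by
    calc s*((b*a)*(s*((a*b)*s)))
        = b*(b*s*b*(a*b)*(b*s*b)*((b*a)*(b*s*b)))*b := by
          simp only [mul_assoc, haz, hbz, ha, hb, one_mul, mul_one]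
      _ = b*((a*b)*((b*s*b)*((b*a)*(b*s*b*(a*b)*(b*s*b))))*(b*a))*b := by rw [P6]
      _ = (b*a)*(s*((a*b)*(s*((b*a)*(s*(a*b)))))) := by
          simp only [mul_assoc, haz, hbz, ha, hb, one_mul, mul_one]
  have G : s⁻¹*((b*a)*(s⁻¹*((a*b)*s⁻¹)))
      = (b*a)*(s⁻¹*((a*b)*(s⁻¹*((b*a)*(s⁻¹*(a*b)))))) := by
    have h := congrArg (·⁻¹) sG
    simpa only [mul_assoc, ia, ib, haz, hbz, ha, hb, one_mul, mul_one, mul_inv_rev, inv_inv,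
      mul_inv_cancel_left, inv_mul_cancel_left, mul_inv_cancel, inv_mul_cancel] using h
  -- final assembly
  have hL : a*s⁻¹*a*(b*(a*(b*(s*(b*a))))⁻¹*b)*(a*s⁻¹*a)
      = a*((b*a)*(s⁻¹*((a*b)*(s⁻¹*((b*a)*(s⁻¹*(a*b)))))))*a := by
    calc a*s⁻¹*a*(b*(a*(b*(s*(b*a))))⁻¹*b)*(a*s⁻¹*a)
        = (a*s⁻¹)*(a*(b*(a*b)))*(s⁻¹*((b*(a*(b*a)))*(s⁻¹*a))) := by
          simp only [mul_assoc, ia, ib, haz, hbz, ha, hb, one_mul, mul_one, mul_inv_rev, inv_inv,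
            mul_inv_cancel_left, inv_mul_cancel_left, mul_inv_cancel, inv_mul_cancel]
      _ = (a*s⁻¹)*(b*a)*(s⁻¹*((b*(a*(b*a)))*(s⁻¹*a))) := by rw [hac]
      _ = (a*s⁻¹)*(b*a)*(s⁻¹*((a*b)*(s⁻¹*a))) := by rw [hca]
      _ = a*(s⁻¹*((b*a)*(s⁻¹*((a*b)*s⁻¹))))*a := by
          simp only [mul_assoc]
      _ = a*((b*a)*(s⁻¹*((a*b)*(s⁻¹*((b*a)*(s⁻¹*(a*b)))))))*a := by rw [G]
  have hR : b*(a*(b*(s*(b*a))))⁻¹*b*(a*s⁻¹*a)*(b*(a*(b*(s*(b*a))))⁻¹*b)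
      = a*((b*a)*(s⁻¹*((a*b)*(s⁻¹*((b*a)*(s⁻¹*(a*b)))))))*a := by
    calc b*(a*(b*(s*(b*a))))⁻¹*b*(a*s⁻¹*a)*(b*(a*(b*(s*(b*a))))⁻¹*b)
        = (b*a*b*s⁻¹)*(b*(a*(b*a)))*(s⁻¹*((a*(b*(a*b)))*(s⁻¹*(b*(a*b))))) := by
          simp only [mul_assoc, ia, ib, haz, hbz, ha, hb, one_mul, mul_one, mul_inv_rev, inv_inv,
            mul_inv_cancel_left, inv_mul_cancel_left, mul_inv_cancel, inv_mul_cancel]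
      _ = (b*a*b*s⁻¹)*(a*b)*(s⁻¹*((b*a)*(s⁻¹*(b*(a*b))))) := by rw [hca, hac]
      _ = (b*a*b)*(s⁻¹*((a*b)*(s⁻¹*((b*a)*s⁻¹))))*(b*a*b) := by
          simp only [mul_assoc]
      _ = (a*b*a)*(s⁻¹*((a*b)*(s⁻¹*((b*a)*s⁻¹))))*(a*b*a) := by rw [← hab]
      _ = a*((b*a)*(s⁻¹*((a*b)*(s⁻¹*((b*a)*(s⁻¹*(a*b)))))))*a := by
          simp only [mul_assoc]
  exact hL.trans hR.symm
end Core


section Core2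
variable {G : Type*} [Group G]

lemma sr_core_mixed7 (a b s u : G) (ha : a*a = 1) (hb : b*b = 1) (hab : a*b*a = b*a*b)
    (h5 : b*a*u = s*b*a) :
    b*a*(b*u⁻¹*b) = a*s⁻¹*a*(b*a) := by
  have ia : a⁻¹ = a := by rw [inv_eq_iff_mul_eq_one, ha]
  have ib : b⁻¹ = b := by rw [inv_eq_iff_mul_eq_one, hb]
  have haz : ∀ z : G, a*(a*z) = z := fun z => by rw [← mul_assoc, ha, one_mul]
  have hbz : ∀ z : G, b*(b*z) = z := fun z => by rw [← mul_assoc, hb, one_mul]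
  have hu : u = a*(b*(s*(b*a))) := by
    have h := congrArg (fun x => a*(b*x)) h5
    simpa only [mul_assoc, ia, ib, haz, hbz, ha, hb, one_mul, mul_one, mul_inv_rev, inv_inv,
      mul_inv_cancel_left, inv_mul_cancel_left, mul_inv_cancel, inv_mul_cancel] using h
  have hac : a*(b*(a*b)) = b*a := by
    calc a*(b*(a*b)) = (a*b*a)*b := by simp only [mul_assoc]
      _ = (b*a*b)*b := by rw [hab]
      _ = b*a := by simp only [mul_assoc, haz, hbz, ha, hb, one_mul, mul_one]
  rw [hu]
  calc b*a*(b*(a*(b*(s*(b*a))))⁻¹*b)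
      = b*((a*(b*(a*b)))*(s⁻¹*(b*(a*b)))) := by
        simp only [mul_assoc, ia, ib, haz, hbz, ha, hb, one_mul, mul_one, mul_inv_rev, inv_inv,
          mul_inv_cancel_left, inv_mul_cancel_left, mul_inv_cancel, inv_mul_cancel]
    _ = b*((b*a)*(s⁻¹*(b*(a*b)))) := by rw [hac]
    _ = a*s⁻¹*(b*a*b) := by
        simp only [mul_assoc, haz, hbz, ha, hb, one_mul, mul_one]
    _ = a*s⁻¹*(a*b*a) := by rw [← hab]
    _ = a*s⁻¹*a*(b*a) := by simp only [mul_assoc]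

lemma sr_core_mixed8 (a b s u : G) (ha : a*a = 1) (hb : b*b = 1) (hab : a*b*a = b*a*b)
    (h5 : b*a*u = s*b*a) (h6 : u*s*b = a*u*s) :
    b*u⁻¹*b*(a*s⁻¹*a)*b = a*(b*u⁻¹*b*(a*s⁻¹*a)) := by
  have ia : a⁻¹ = a := by rw [inv_eq_iff_mul_eq_one, ha]
  have ib : b⁻¹ = b := by rw [inv_eq_iff_mul_eq_one, hb]
  have haz : ∀ z : G, a*(a*z) = z := fun z => by rw [← mul_assoc, ha, one_mul]
  have hbz : ∀ z : G, b*(b*z) = z := fun z => by rw [← mul_assoc, hb, one_mul]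
  have hu : u = a*(b*(s*(b*a))) := by
    have h := congrArg (fun x => a*(b*x)) h5
    simpa only [mul_assoc, ia, ib, haz, hbz, ha, hb, one_mul, mul_one, mul_inv_rev, inv_inv,
      mul_inv_cancel_left, inv_mul_cancel_left, mul_inv_cancel, inv_mul_cancel] using h
  rw [hu] at h6 ⊢
  have hac : a*(b*(a*b)) = b*a := by
    calc a*(b*(a*b)) = (a*b*a)*b := by simp only [mul_assoc]
      _ = (b*a*b)*b := by rw [hab]
      _ = b*a := by simp only [mul_assoc, haz, hbz, ha, hb, one_mul, mul_one]
  have hca : b*(a*(b*a)) = a*b := by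
    calc b*(a*(b*a)) = (b*a*b)*a := by simp only [mul_assoc]
      _ = (a*b*a)*a := by rw [← hab]
      _ = a*b := by simp only [mul_assoc, haz, hbz, ha, hb, one_mul, mul_one]
  have K : b*(s*(b*(a*(s*b)))) = a*(b*(s*(b*(a*s)))) := by
    have h := congrArg (a * ·) h6
    simpa only [mul_assoc, ia, ib, haz, hbz, ha, hb, one_mul, mul_one, mul_inv_rev, inv_inv,
      mul_inv_cancel_left, inv_mul_cancel_left, mul_inv_cancel, inv_mul_cancel] using h
  have Kinv : b*(s⁻¹*(a*(b*(s⁻¹*b)))) = s⁻¹*(a*(b*(s⁻¹*(b*a)))) := by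
    have h := congrArg (·⁻¹) K
    simpa only [mul_assoc, ia, ib, haz, hbz, ha, hb, one_mul, mul_one, mul_inv_rev, inv_inv,
      mul_inv_cancel_left, inv_mul_cancel_left, mul_inv_cancel, inv_mul_cancel] using h
  have hL : b*(a*(b*(s*(b*a))))⁻¹*b*(a*s⁻¹*a)*b = (b*a)*(s⁻¹*(a*(b*(s⁻¹*a)))) := by
    calc b*(a*(b*(s*(b*a))))⁻¹*b*(a*s⁻¹*a)*b
        = (b*a*b*s⁻¹)*(b*(a*(b*a)))*(s⁻¹*(a*b)) := by
          simp only [mul_assoc, ia, ib, haz, hbz, ha, hb, one_mul, mul_one, mul_inv_rev, inv_inv,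
            mul_inv_cancel_left, inv_mul_cancel_left, mul_inv_cancel, inv_mul_cancel]
      _ = (b*a*b*s⁻¹)*(a*b)*(s⁻¹*(a*b)) := by rw [hca]
      _ = (b*a)*(b*(s⁻¹*(a*(b*(s⁻¹*b)))))*(b*(a*b)) := by
          simp only [mul_assoc, haz, hbz, ha, hb, one_mul, mul_one]
      _ = (b*a)*(s⁻¹*(a*(b*(s⁻¹*(b*a)))))*(b*(a*b)) := by rw [Kinv]
      _ = (b*a)*(s⁻¹*(a*(b*s⁻¹)))*(b*(a*b*a)*b) := by
          simp only [mul_assoc, haz, hbz, ha, hb, one_mul, mul_one]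
      _ = (b*a)*(s⁻¹*(a*(b*s⁻¹)))*(b*(b*a*b)*b) := by rw [hab]
      _ = (b*a)*(s⁻¹*(a*(b*(s⁻¹*a)))) := by
          simp only [mul_assoc, haz, hbz, ha, hb, one_mul, mul_one]
  have hR : a*(b*(a*(b*(s*(b*a))))⁻¹*b*(a*s⁻¹*a)) = (b*a)*(s⁻¹*(a*(b*(s⁻¹*a)))) := by
    calc a*(b*(a*(b*(s*(b*a))))⁻¹*b*(a*s⁻¹*a))
        = (a*(b*(a*b)))*(s⁻¹*(b*(a*(b*(a*(s⁻¹*a)))))) := by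
          simp only [mul_assoc, ia, ib, haz, hbz, ha, hb, one_mul, mul_one, mul_inv_rev, inv_inv,
            mul_inv_cancel_left, inv_mul_cancel_left, mul_inv_cancel, inv_mul_cancel]
      _ = (b*a)*(s⁻¹*(b*(a*(b*(a*(s⁻¹*a)))))) := by rw [hac]
      _ = (b*a)*(s⁻¹*((b*(a*(b*a)))*(s⁻¹*a))) := by
          simp only [mul_assoc]
      _ = (b*a)*(s⁻¹*((a*b)*(s⁻¹*a))) := by rw [hca]
      _ = (b*a)*(s⁻¹*(a*(b*(s⁻¹*a)))) := by simp only [mul_assoc]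
  exact hL.trans hR.symm

lemma sr_core_comm (a s c t : G) (h1 : Commute a c) (h2 : Commute a t)
    (h3 : Commute s c) (h4 : Commute s t) : Commute (a*s⁻¹*a) (c*t⁻¹*c) :=
  ((((h1.mul_left h3.inv_left).mul_left h1).mul_right
    (((h2.mul_left h4.inv_left).mul_left h2).inv_right)).mul_right
    ((h1.mul_left h3.inv_left).mul_left h1))

lemma sr_core_comm1 (a c t : G) (h1 : Commute a c) (h2 : Commute a t) :
    Commute a (c*t⁻¹*c) :=
  (h1.mul_right h2.inv_right).mul_right h1

end Core2

lemma wb_mk_rel {n : ℕ} {A B : FreeGroup (WGen n)} (h : A * B⁻¹ ∈ wRels n) :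
    PresentedGroup.mk (wRels n) A = PresentedGroup.mk (wRels n) B := by
  have h1 : PresentedGroup.mk (wRels n) (A * B⁻¹) = 1 := by
    apply (QuotientGroup.eq_one_iff _).mpr
    exact Subgroup.subset_normalClosure h
  rwa [map_mul, map_inv, mul_inv_eq_one] at h1

lemma wb_ss_comm {n i j : ℕ} (hi : i + 1 < n) (hj : j + 1 < n) (hij : i + 1 < j) :
    ws n i hi * ws n j hj = ws n j hj * ws n i hi := by
  simpa only [map_mul, WSg, ws, PresentedGroup.of] using
    wb_mk_rel (Or.inl ⟨i, j, hi, hj, hij, rfl⟩)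

lemma wb_ss_braid {n i : ℕ} (h : i + 2 < n) (h' : i + 1 < n) :
    ws n i h' * ws n (i+1) h * ws n i h' = ws n (i+1) h * ws n i h' * ws n (i+1) h := by
  simpa only [map_mul, WSg, ws, PresentedGroup.of] using
    wb_mk_rel (Or.inr (Or.inl ⟨i, h, rfl⟩))

lemma wb_rr_comm {n i j : ℕ} (hi : i + 1 < n) (hj : j + 1 < n) (hij : i + 1 < j) :
    wr n i hi * wr n j hj = wr n j hj * wr n i hi := by
  simpa only [map_mul, WRg, wr, PresentedGroup.of] using
    wb_mk_rel (Or.inr (Or.inr (Or.inl ⟨i, j, hi, hj, hij, rfl⟩)))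

lemma wb_rr_braid {n i : ℕ} (h : i + 2 < n) (h' : i + 1 < n) :
    wr n i h' * wr n (i+1) h * wr n i h' = wr n (i+1) h * wr n i h' * wr n (i+1) h := by
  simpa only [map_mul, WRg, wr, PresentedGroup.of] using
    wb_mk_rel (Or.inr (Or.inr (Or.inr (Or.inl ⟨i, h, rfl⟩))))

lemma wb_rho_sq {n i : ℕ} (h : i + 1 < n) : wr n i h * wr n i h = 1 := by
  have h1 : PresentedGroup.mk (wRels n) (WRg n i h * WRg n i h) = 1 := by
    apply (QuotientGroup.eq_one_iff _).mpr
    exact Subgroup.subset_normalClosure (Or.inr (Or.inr (Or.inr (Or.inr (Or.inl ⟨i, h, rfl⟩)))))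
  simpa only [map_mul, WRg, wr, PresentedGroup.of] using h1

lemma wb_rs_comm {n i j : ℕ} (hi : i + 1 < n) (hj : j + 1 < n) (hij : i + 1 < j ∨ j + 1 < i) :
    wr n i hi * ws n j hj = ws n j hj * wr n i hi := by
  simpa only [map_mul, WSg, WRg, ws, wr, PresentedGroup.of] using
    wb_mk_rel (Or.inr (Or.inr (Or.inr (Or.inr (Or.inr (Or.inl ⟨i, j, hi, hj, hij, rfl⟩))))))

lemma wb_mixed7 {n i : ℕ} (h : i + 2 < n) (h' : i + 1 < n) :
    wr n (i+1) h * wr n i h' * ws n (i+1) h = ws n i h' * wr n (i+1) h * wr n i h' := by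
  simpa only [map_mul, WSg, WRg, ws, wr, PresentedGroup.of] using
    wb_mk_rel (Or.inr (Or.inr (Or.inr (Or.inr (Or.inr (Or.inr (Or.inl ⟨i, h, rfl⟩)))))))

lemma wb_mixed8 {n i : ℕ} (h : i + 2 < n) (h' : i + 1 < n) :
    ws n (i+1) h * ws n i h' * wr n (i+1) h = wr n i h' * ws n (i+1) h * ws n i h' := by
  simpa only [map_mul, WSg, WRg, ws, wr, PresentedGroup.of] using
    wb_mk_rel (Or.inr (Or.inr (Or.inr (Or.inr (Or.inr (Or.inr (Or.inr ⟨i, h, rfl⟩)))))))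

lemma wb_rr_comm' {n i j : ℕ} (hi : i + 1 < n) (hj : j + 1 < n) (hij : i + 1 < j ∨ j + 1 < i) :
    wr n i hi * wr n j hj = wr n j hj * wr n i hi := by
  rcases hij with h | h
  · exact wb_rr_comm hi hj h
  · exact (wb_rr_comm hj hi h).symm

/-- The sign-reversal images of the generators. -/
def wf (n : ℕ) : WGen n → WB n
  | .sigma i h => wr n i h * (ws n i h)⁻¹ * wr n i h
  | .rho i h => wr n i h

lemma wf_rels (n : ℕ) : ∀ r ∈ wRels n, FreeGroup.lift (wf n) r = 1 := by
  intro r hr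
  rcases hr with ⟨i,j,hi,hj,hij,rfl⟩ | ⟨i,h,rfl⟩ | ⟨i,j,hi,hj,hij,rfl⟩ | ⟨i,h,rfl⟩ |
    ⟨i,h,rfl⟩ | ⟨i,j,hi,hj,hij,rfl⟩ | ⟨i,h,rfl⟩ | ⟨i,h,rfl⟩ <;>
    simp only [map_mul, map_inv, WSg, WRg, FreeGroup.lift_apply_of, wf, mul_inv_eq_one]
  · -- σ_i σ_j = σ_j σ_i, i+1<j
    exact (sr_core_comm _ _ _ _
      (wb_rr_comm hi hj hij) (wb_rs_comm hi hj (Or.inl hij))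
      ((wb_rs_comm hj hi (Or.inr hij)).symm) (wb_ss_comm hi hj hij)).eq
  · -- σ braid
    refine Eq.trans ?_ ((sr_core_braid (wr n i (by omega)) (wr n (i+1) h)
      (ws n i (by omega)) (ws n (i+1) h)
      (wb_rho_sq _) (wb_rho_sq _) (wb_rr_braid h (by omega))
      (wb_ss_braid h (by omega)) (wb_mixed7 h (by omega)) (wb_mixed8 h (by omega))).trans ?_) <;>
      group
  · -- ρ ρ comm
    exact wb_rr_comm hi hj hij
  · -- ρ braid
    exact wb_rr_braid h (by omega)
  · -- ρ² = 1
    exact wb_rho_sq h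
  · -- ρ_i σ_j comm
    exact (sr_core_comm1 _ _ _
      (wb_rr_comm' hi hj hij) (wb_rs_comm hi hj hij)).eq
  · -- mixed 7
    refine Eq.trans ?_ ((sr_core_mixed7 (wr n i (by omega)) (wr n (i+1) h)
      (ws n i (by omega)) (ws n (i+1) h)
      (wb_rho_sq _) (wb_rho_sq _) (wb_rr_braid h (by omega))
      (wb_mixed7 h (by omega))).trans ?_) <;> group
  · -- mixed 8
    refine Eq.trans ?_ ((sr_core_mixed8 (wr n i (by omega)) (wr n (i+1) h)
      (ws n i (by omega)) (ws n (i+1) h)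
      (wb_rho_sq _) (wb_rho_sq _) (wb_rr_braid h (by omega))
      (wb_mixed7 h (by omega)) (wb_mixed8 h (by omega))).trans ?_) <;> group

/-- In the welded braid group `WB_n`, the assignment `σ_i ↦ ρ_iσ_i⁻¹ρ_i`, `ρ_i ↦ ρ_i` extends
to a well-defined group endomorphism (sign reversal), which is an involutive automorphism. -/
theorem sign_reversal_automorphism_welded (n : ℕ) :
    ∃ Φ : WB n ≃* WB n,
      (∀ (i : ℕ) (h : i + 1 < n),
        Φ (ws n i h) = wr n i h * (ws n i h)⁻¹ * wr n i h) ∧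
      (∀ (i : ℕ) (h : i + 1 < n), Φ (wr n i h) = wr n i h) ∧
      (∀ x : WB n, Φ (Φ x) = x) := by

  let φ : WB n →* WB n := PresentedGroup.toGroup (wf_rels n)
  have hσ : ∀ (i : ℕ) (h : i + 1 < n),
      φ (ws n i h) = wr n i h * (ws n i h)⁻¹ * wr n i h := fun i h =>
    PresentedGroup.toGroup.of (wf_rels n)
  have hρ : ∀ (i : ℕ) (h : i + 1 < n), φ (wr n i h) = wr n i h := fun i h =>
    PresentedGroup.toGroup.of (wf_rels n)
  have hinv : ∀ x : WB n, φ (φ x) = x := by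
    have hcomp : φ.comp φ = MonoidHom.id (WB n) := by
      apply PresentedGroup.ext
      intro x
      cases x with
      | sigma i h =>
        show φ (φ (ws n i h)) = ws n i h
        rw [hσ, map_mul, map_mul, map_inv, hσ, hρ]
        group
      | rho i h =>
        show φ (φ (wr n i h)) = wr n i h
        rw [hρ, hρ]
    intro x
    simpa using DFunLike.congr_fun hcomp x
  refine ⟨{ toFun := φ, invFun := φ, left_inv := hinv, right_inv := hinv,
            map_mul' := map_mul φ }, hσ, hρ, hinv⟩
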